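/- arXiv:1212.4186 — 4 statements merged into one kernel-verified Lean document; each statement's English description precedes it below -/
import Mathlib

section
/- Let ħ > 0, let V : ℝ³ → ℝ and A : ℝ³ → ℝ³ be smooth, and let η : ℝ³ × I → ℝ be a smooth strictly positive function on an open time interval I satisfying ħ ∂η/∂t = −(ħ²/2) Δη + ħ A·∇η + (ħ/2)(∇·A) η − (1/2)|A|² η + V η. Define the forward drift B := ħ ∇ log η − A. Then B satisfies, for each component i = 1,2,3, the almost-sure stochastic Euler–Lagrange equation at the level of drift fields: ∂B_i/∂t + (B·∇)B_i + (ħ/2) ΔB_i = ∂V/∂x_i + Σ_j B_j (∂A_j/∂x_i − ∂A_i/∂x_j) + (ħ/2)(∂(∇·A)/∂x_i − ΔA_i). -/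
open MeasureTheory Real Set

noncomputable section

/-- Time partial derivative of a function of space `x ∈ ℝ³` and time `t`. -/
def pt (f : (Fin 3 → ℝ) → ℝ → ℝ) (x : Fin 3 → ℝ) (t : ℝ) : ℝ := deriv (f x) t

/-- Spatial partial derivative `∂/∂x_i` of a function of space and time. -/
def pd (i : Fin 3) (f : (Fin 3 → ℝ) → ℝ → ℝ) (x : Fin 3 → ℝ) (t : ℝ) : ℝ :=
  deriv (fun s => f (Function.update x i s) t) (x i)

/-- Spatial Laplacian `Δ = Σᵢ ∂²/∂x_i²` of a function of space and time. -/
def lap (f : (Fin 3 → ℝ) → ℝ → ℝ) (x : Fin 3 → ℝ) (t : ℝ) : ℝ := ∑ i, pd i (pd i f) x t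

/-- Spatial partial derivative `∂/∂x_i` of a function of space only. -/
def pds (i : Fin 3) (f : (Fin 3 → ℝ) → ℝ) (x : Fin 3 → ℝ) : ℝ :=
  deriv (fun s => f (Function.update x i s)) (x i)

/-!
With `F = log η`, the relation `ħ ∇F = B + A` turns the linear equation for `η`, divided by `η`,
into the Hamilton–Jacobi equation `ħ ∂ₜF + |B|²/2 + (ħ/2) ∇·B = V`. Differentiating it in `xᵢ`
and using the symmetry of second derivatives of `F`, which gives `∂ₜBᵢ = ħ ∂ᵢ∂ₜF` and
`∂ᵢBⱼ - ∂ⱼBᵢ = ∂ⱼAᵢ - ∂ᵢAⱼ`, the derivative of `|B|²/2` becomes the convective term plus the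
magnetic force, and that of `∇·B` becomes `ΔBᵢ + ΔAᵢ - ∂ᵢ(∇·A)`.
-/

open Function Filter

theorem fderiv_fderiv_apply_comm {E F : Type*} [NormedAddCommGroup E] [NormedSpace ℝ E]
    [NormedAddCommGroup F] [NormedSpace ℝ F] {G : E → F} {p : E} (hG : ContDiffAt ℝ 2 G p)
    (v w : E) :
    fderiv ℝ (fun q => fderiv ℝ G q v) p w = fderiv ℝ (fun q => fderiv ℝ G q w) p v := by
  have hd : DifferentiableAt ℝ (fderiv ℝ G) p :=
    (hG.fderiv_right (m := 1) le_rfl).differentiableAt one_ne_zero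
  have happly : ∀ u, fderiv ℝ (fun q => fderiv ℝ G q u) p = (fderiv ℝ (fderiv ℝ G) p).flip u :=
    fun u => by simp [fderiv_clm_apply hd (differentiableAt_const u)]
  rw [happly, happly]
  exact (hG.isSymmSndFDerivAt (by simp)).eq w v

section SpaceTimeLines

variable {ι : Type*} [Fintype ι] {G : (ι → ℝ) × ℝ → ℝ} {x : ι → ℝ} {t : ℝ}

theorem DifferentiableAt.hasDerivAt_comp_update [DecidableEq ι]
    (hG : DifferentiableAt ℝ G (x, t)) (i : ι) :
    HasDerivAt (fun s => G (update x i s, t)) (fderiv ℝ G (x, t) (Pi.single i 1, 0)) (x i) := by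
  have hG' : HasFDerivAt G (fderiv ℝ G (x, t)) (update x i (x i), t) := by
    simpa using hG.hasFDerivAt
  exact hG'.comp_hasDerivAt (x i) ((hasDerivAt_update x i (x i)).prodMk (hasDerivAt_const _ t))

theorem DifferentiableAt.hasDerivAt_comp_prodMk (hG : DifferentiableAt ℝ G (x, t)) :
    HasDerivAt (fun s => G (x, s)) (fderiv ℝ G (x, t) (0, 1)) t :=
  hG.hasFDerivAt.comp_hasDerivAt t ((hasDerivAt_const t x).prodMk (hasDerivAt_id t))

end SpaceTimeLines

def SpaceTimeSmooth (I : Set ℝ) (f : (Fin 3 → ℝ) → ℝ → ℝ) : Prop :=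
  ContDiffOn ℝ (⊤ : ℕ∞) (uncurry f) (univ ×ˢ I)

theorem pd_congr {f g : (Fin 3 → ℝ) → ℝ → ℝ} {t : ℝ} (h : ∀ y, f y t = g y t) (i : Fin 3)
    (x : Fin 3 → ℝ) : pd i f x t = pd i g x t := by
  simp only [pd, h]

theorem fderiv_uncurry_congr {I : Set ℝ} {f g : (Fin 3 → ℝ) → ℝ → ℝ} {v : (Fin 3 → ℝ) × ℝ}
    {x : Fin 3 → ℝ} {t : ℝ} (hI : IsOpen I) (ht : t ∈ I)
    (hg : ∀ y, ∀ s ∈ I, g y s = fderiv ℝ (uncurry f) (y, s) v) :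
    fderiv ℝ (uncurry g) (x, t) = fderiv ℝ (fun p => fderiv ℝ (uncurry f) p v) (x, t) :=
  EventuallyEq.fderiv_eq <| eventually_of_mem (prod_mem_nhds univ_mem (hI.mem_nhds ht))
    fun p hp => hg p.1 p.2 hp.2

namespace SpaceTimeSmooth

variable {I : Set ℝ} {f : (Fin 3 → ℝ) → ℝ → ℝ} {x : Fin 3 → ℝ} {t : ℝ}

theorem of_contDiff {g : (Fin 3 → ℝ) → ℝ} (hg : ContDiff ℝ (⊤ : ℕ∞) g) :
    SpaceTimeSmooth I (fun y _ => g y) :=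
  (hg.comp contDiff_fst).contDiffOn

theorem log (hf : SpaceTimeSmooth I f) (hf0 : ∀ x, ∀ t ∈ I, f x t ≠ 0) :
    SpaceTimeSmooth I (fun y s => Real.log (f y s)) :=
  ContDiffOn.log hf fun p hp => hf0 p.1 p.2 hp.2

theorem contDiffAt (hI : IsOpen I) (hf : SpaceTimeSmooth I f) (ht : t ∈ I) :
    ContDiffAt ℝ (⊤ : ℕ∞) (uncurry f) (x, t) :=
  ContDiffOn.contDiffAt hf (prod_mem_nhds univ_mem (hI.mem_nhds ht))

theorem differentiableAt (hI : IsOpen I) (hf : SpaceTimeSmooth I f) (ht : t ∈ I) :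
    DifferentiableAt ℝ (uncurry f) (x, t) :=
  (hf.contDiffAt hI ht).differentiableAt (by simp)

theorem pd_eq_fderiv (hI : IsOpen I) (hf : SpaceTimeSmooth I f) (ht : t ∈ I) (i : Fin 3) :
    pd i f x t = fderiv ℝ (uncurry f) (x, t) (Pi.single i 1, 0) :=
  ((hf.differentiableAt hI ht).hasDerivAt_comp_update i).deriv

theorem pt_eq_fderiv (hI : IsOpen I) (hf : SpaceTimeSmooth I f) (ht : t ∈ I) :
    pt f x t = fderiv ℝ (uncurry f) (x, t) (0, 1) :=
  (hf.differentiableAt hI ht).hasDerivAt_comp_prodMk.deriv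

theorem hasDerivAt_pd (hI : IsOpen I) (hf : SpaceTimeSmooth I f) (ht : t ∈ I) (x : Fin 3 → ℝ)
    (i : Fin 3) :
    HasDerivAt (fun s => f (update x i s) t) (pd i f x t) (x i) :=
  ((hf.differentiableAt hI ht).hasDerivAt_comp_update i).differentiableAt.hasDerivAt

theorem hasDerivAt_pt (hI : IsOpen I) (hf : SpaceTimeSmooth I f) (ht : t ∈ I) :
    HasDerivAt (f x) (pt f x t) t :=
  (hf.differentiableAt hI ht).hasDerivAt_comp_prodMk.differentiableAt.hasDerivAt

theorem contDiffOn_fderiv_apply (hI : IsOpen I) (hf : SpaceTimeSmooth I f)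
    (v : (Fin 3 → ℝ) × ℝ) :
    ContDiffOn ℝ (⊤ : ℕ∞) (fun p => fderiv ℝ (uncurry f) p v) (univ ×ˢ I) :=
  (hf.fderiv_of_isOpen (isOpen_univ.prod hI) le_rfl).clm_apply contDiffOn_const

protected theorem pd (hI : IsOpen I) (hf : SpaceTimeSmooth I f) (i : Fin 3) :
    SpaceTimeSmooth I (pd i f) :=
  (hf.contDiffOn_fderiv_apply hI _).congr fun _ hp => hf.pd_eq_fderiv hI hp.2 i

protected theorem pt (hI : IsOpen I) (hf : SpaceTimeSmooth I f) : SpaceTimeSmooth I (pt f) :=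
  (hf.contDiffOn_fderiv_apply hI _).congr fun _ hp => hf.pt_eq_fderiv hI hp.2

theorem pd_pd_comm (hI : IsOpen I) (hf : SpaceTimeSmooth I f) (ht : t ∈ I) (i j : Fin 3) :
    pd i (pd j f) x t = pd j (pd i f) x t := by
  rw [(hf.pd hI j).pd_eq_fderiv hI ht, (hf.pd hI i).pd_eq_fderiv hI ht,
    fderiv_uncurry_congr hI ht fun _ _ hs => hf.pd_eq_fderiv hI hs j,
    fderiv_uncurry_congr hI ht fun _ _ hs => hf.pd_eq_fderiv hI hs i]
  exact fderiv_fderiv_apply_comm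
    ((hf.contDiffAt hI ht).of_le (WithTop.coe_le_coe.mpr le_top)) _ _

theorem pt_pd_comm (hI : IsOpen I) (hf : SpaceTimeSmooth I f) (ht : t ∈ I) (i : Fin 3) :
    pt (pd i f) x t = pd i (pt f) x t := by
  rw [(hf.pd hI i).pt_eq_fderiv hI ht, (hf.pt hI).pd_eq_fderiv hI ht,
    fderiv_uncurry_congr hI ht fun _ _ hs => hf.pd_eq_fderiv hI hs i,
    fderiv_uncurry_congr hI ht fun _ _ hs => hf.pt_eq_fderiv hI hs]
  exact fderiv_fderiv_apply_comm
    ((hf.contDiffAt hI ht).of_le (WithTop.coe_le_coe.mpr le_top)) _ _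

theorem pt_log (hI : IsOpen I) (hf : SpaceTimeSmooth I f) (ht : t ∈ I) (hf0 : f x t ≠ 0) :
    pt (fun y s => Real.log (f y s)) x t = pt f x t / f x t :=
  ((hf.hasDerivAt_pt hI ht).log hf0).deriv

theorem pd_log (hI : IsOpen I) (hf : SpaceTimeSmooth I f) (ht : t ∈ I) (hf0 : f x t ≠ 0)
    (i : Fin 3) : pd i (fun y s => Real.log (f y s)) x t = pd i f x t / f x t := by
  have hlog := (hf.hasDerivAt_pd hI ht x i).log (by simpa using hf0)
  simp only [update_eq_self] at hlog
  exact hlog.deriv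

theorem pd_pd_log (hI : IsOpen I) (hf : SpaceTimeSmooth I f) (ht : t ∈ I)
    (hf0 : ∀ y, f y t ≠ 0) (i : Fin 3) :
    pd i (pd i (fun y s => Real.log (f y s))) x t
      = pd i (pd i f) x t / f x t - (pd i f x t / f x t) ^ 2 := by
  have hquot := ((hf.pd hI i).hasDerivAt_pd hI ht x i).div (hf.hasDerivAt_pd hI ht x i)
    (by simpa using hf0 x)
  simp only [update_eq_self] at hquot
  calc pd i (pd i (fun y s => Real.log (f y s))) x t
      = pd i (fun y s => pd i f y s / f y s) x t :=
        pd_congr (fun y => hf.pd_log hI ht (hf0 y) i) i x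
    _ = (pd i (pd i f) x t * f x t - pd i f x t * pd i f x t) / f x t ^ 2 := hquot.deriv
    _ = _ := by field_simp

end SpaceTimeSmooth

section TimeIndependent

variable {g : (Fin 3 → ℝ) → ℝ}

theorem hasDerivAt_pds (hg : ContDiff ℝ (⊤ : ℕ∞) g) (x : Fin 3 → ℝ) (i : Fin 3) :
    HasDerivAt (fun s => g (update x i s)) (pds i g x) (x i) :=
  (SpaceTimeSmooth.of_contDiff hg).hasDerivAt_pd isOpen_univ (mem_univ 0) x i

theorem contDiff_pds (hg : ContDiff ℝ (⊤ : ℕ∞) g) (i : Fin 3) :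
    ContDiff ℝ (⊤ : ℕ∞) (pds i g) := by
  have h := (SpaceTimeSmooth.of_contDiff hg (I := univ)).pd isOpen_univ i
  rw [SpaceTimeSmooth, univ_prod_univ, contDiffOn_univ] at h
  exact h.comp (contDiff_id.prodMk (contDiff_const (c := 0)))

theorem pds_pds_comm (hg : ContDiff ℝ (⊤ : ℕ∞) g) (i j : Fin 3) (x : Fin 3 → ℝ) :
    pds i (pds j g) x = pds j (pds i g) x :=
  (SpaceTimeSmooth.of_contDiff hg).pd_pd_comm isOpen_univ (mem_univ 0) i j

theorem pds_sum {g : Fin 3 → (Fin 3 → ℝ) → ℝ} (hg : ∀ j, ContDiff ℝ (⊤ : ℕ∞) (g j)) (i : Fin 3)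
    (x : Fin 3 → ℝ) : pds i (fun y => ∑ j, g j y) x = ∑ j, pds i (g j) x :=
  (HasDerivAt.fun_sum fun j _ => hasDerivAt_pds (hg j) x i).deriv

end TimeIndependent

section Drift

variable {I : Set ℝ} {hbar : ℝ} {F : (Fin 3 → ℝ) → ℝ → ℝ} {A : (Fin 3 → ℝ) → Fin 3 → ℝ}
  {B : (Fin 3 → ℝ) → ℝ → Fin 3 → ℝ} {x : Fin 3 → ℝ} {t : ℝ}

theorem drift_eq (hB : ∀ x t i, B x t i = hbar * pd i F x t - A x i) (j : Fin 3) :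
    (fun y s => B y s j) = fun y s => hbar * pd j F y s - A y j :=
  funext fun y => funext fun s => hB y s j

theorem SpaceTimeSmooth.drift (hI : IsOpen I) (hF : SpaceTimeSmooth I F)
    (hA : ContDiff ℝ (⊤ : ℕ∞) A) (hB : ∀ x t i, B x t i = hbar * pd i F x t - A x i)
    (j : Fin 3) : SpaceTimeSmooth I (fun y s => B y s j) := by
  rw [drift_eq hB]
  exact (contDiffOn_const.mul (hF.pd hI j)).sub (of_contDiff (contDiff_pi.mp hA j))

theorem pd_drift (hI : IsOpen I) (hF : SpaceTimeSmooth I F) (hA : ContDiff ℝ (⊤ : ℕ∞) A)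
    (hB : ∀ x t i, B x t i = hbar * pd i F x t - A x i) (ht : t ∈ I) (j k : Fin 3) :
    pd k (fun y s => B y s j) x t = hbar * pd k (pd j F) x t - pds k (fun y => A y j) x := by
  rw [drift_eq hB]
  exact ((((hF.pd hI j).hasDerivAt_pd hI ht x k).const_mul hbar).sub
    (hasDerivAt_pds (contDiff_pi.mp hA j) x k)).deriv

theorem pt_drift (hI : IsOpen I) (hF : SpaceTimeSmooth I F)
    (hB : ∀ x t i, B x t i = hbar * pd i F x t - A x i) (ht : t ∈ I) (i : Fin 3) :
    pt (fun y s => B y s i) x t = hbar * pd i (pt F) x t := by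
  rw [drift_eq hB, ← hF.pt_pd_comm hI ht i]
  exact ((((hF.pd hI i).hasDerivAt_pt hI ht).const_mul hbar).sub_const (A x i)).deriv

theorem pd_drift_swap (hI : IsOpen I) (hF : SpaceTimeSmooth I F) (hA : ContDiff ℝ (⊤ : ℕ∞) A)
    (hB : ∀ x t i, B x t i = hbar * pd i F x t - A x i) (ht : t ∈ I) (i j : Fin 3) :
    pd i (fun y s => B y s j) x t
      = pd j (fun y s => B y s i) x t + pds j (fun y => A y i) x - pds i (fun y => A y j) x := by
  rw [pd_drift hI hF hA hB ht, pd_drift hI hF hA hB ht, hF.pd_pd_comm hI ht i j]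
  ring

theorem pd_pd_drift_swap (hI : IsOpen I) (hF : SpaceTimeSmooth I F)
    (hA : ContDiff ℝ (⊤ : ℕ∞) A) (hB : ∀ x t i, B x t i = hbar * pd i F x t - A x i)
    (ht : t ∈ I) (i j : Fin 3) :
    pd i (pd j (fun y s => B y s j)) x t
      = pd j (pd j (fun y s => B y s i)) x t + pds j (pds j (fun y => A y i)) x
        - pds i (pds j (fun y => A y j)) x := by
  have hAi := contDiff_pi.mp hA i
  have hAj := contDiff_pi.mp hA j
  have hswap := ((((hF.drift hI hA hB i).pd hI j).hasDerivAt_pd hI ht x j).add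
    (hasDerivAt_pds (contDiff_pds hAi j) x j)).sub (hasDerivAt_pds (contDiff_pds hAj i) x j)
  calc pd i (pd j (fun y s => B y s j)) x t
      = pd j (pd i (fun y s => B y s j)) x t := (hF.drift hI hA hB j).pd_pd_comm hI ht i j
    _ = pd j (fun y s => pd j (fun y s => B y s i) y s + pds j (fun y => A y i) y
          - pds i (fun y => A y j) y) x t :=
        pd_congr (fun y => pd_drift_swap hI hF hA hB ht i j) j x
    _ = pd j (pd j (fun y s => B y s i)) x t + pds j (pds j (fun y => A y i)) x
          - pds j (pds i (fun y => A y j)) x := hswap.deriv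
    _ = _ := by rw [pds_pds_comm hAj j i]

theorem pd_hamiltonJacobi {V : (Fin 3 → ℝ) → ℝ} (hI : IsOpen I) (hF : SpaceTimeSmooth I F)
    (hA : ContDiff ℝ (⊤ : ℕ∞) A) (hB : ∀ x t i, B x t i = hbar * pd i F x t - A x i)
    (hHJB : ∀ x, ∀ t ∈ I,
      hbar * pt F x t + (∑ j, B x t j ^ 2) / 2 + hbar / 2 * ∑ j, pd j (fun y s => B y s j) x t
        = V x)
    (x : Fin 3 → ℝ) (ht : t ∈ I) (i : Fin 3) :
    hbar * pd i (pt F) x t + ∑ j, B x t j * pd i (fun y s => B y s j) x t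
      + hbar / 2 * ∑ j, pd i (pd j (fun y s => B y s j)) x t = pds i V x := by
  have hb := hF.drift hI hA hB
  have hsq : ∀ j, HasDerivAt (fun s => B (update x i s) t j ^ 2)
      (B x t j * pd i (fun y s => B y s j) x t * 2) (x i) := fun j => by
    refine (((hb j).hasDerivAt_pd hI ht x i).fun_pow 2).congr_deriv ?_
    simp only [update_eq_self]
    ring
  have hline : HasDerivAt
      (fun s => hbar * pt F (update x i s) t + (∑ j, B (update x i s) t j ^ 2) / 2
        + hbar / 2 * ∑ j, pd j (fun y s => B y s j) (update x i s) t)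
      (hbar * pd i (pt F) x t + ∑ j, B x t j * pd i (fun y s => B y s j) x t
        + hbar / 2 * ∑ j, pd i (pd j (fun y s => B y s j)) x t) (x i) := by
    refine ((((hF.pt hI).hasDerivAt_pd hI ht x i).const_mul hbar).fun_add
      ((HasDerivAt.fun_sum fun j _ => hsq j).div_const 2)).fun_add
      ((HasDerivAt.fun_sum fun j _ =>
        ((hb j).pd hI j).hasDerivAt_pd hI ht x i).const_mul (hbar / 2))
      |>.congr_deriv ?_
    rw [← Finset.sum_mul]
    ring
  calc _ = pd i (fun y s => hbar * pt F y s + (∑ j, B y s j ^ 2) / 2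
          + hbar / 2 * ∑ j, pd j (fun y s => B y s j) y s) x t := hline.deriv.symm
    _ = pds i V x := pd_congr (g := fun y _ => V y) (fun y => hHJB y t ht) i x

end Drift

theorem hamiltonJacobi_of_schrodinger {hbar : ℝ} {V : (Fin 3 → ℝ) → ℝ}
    {A : (Fin 3 → ℝ) → Fin 3 → ℝ} (hA : ContDiff ℝ (⊤ : ℕ∞) A) {I : Set ℝ} (hI : IsOpen I)
    {η : (Fin 3 → ℝ) → ℝ → ℝ} (hη : SpaceTimeSmooth I η) (hη0 : ∀ x, ∀ t ∈ I, η x t ≠ 0)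
    (hPDE : ∀ x, ∀ t ∈ I,
      hbar * pt η x t =
        -(hbar ^ 2 / 2) * lap η x t + hbar * (∑ j, A x j * pd j η x t)
          + (hbar / 2) * (∑ j, pds j (fun y => A y j) x) * η x t
          - (1 / 2) * (∑ j, (A x j) ^ 2) * η x t + V x * η x t)
    {B : (Fin 3 → ℝ) → ℝ → Fin 3 → ℝ}
    (hB : ∀ x t i, B x t i = hbar * pd i (fun y s => Real.log (η y s)) x t - A x i) :
    ∀ x, ∀ t ∈ I,
      hbar * pt (fun y s => Real.log (η y s)) x t + (∑ j, B x t j ^ 2) / 2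
        + hbar / 2 * ∑ j, pd j (fun y s => B y s j) x t = V x := by
  intro x t ht
  have hdivB : ∀ j, pd j (fun y s => B y s j) x t
      = hbar * (pd j (pd j η) x t / η x t - (pd j η x t / η x t) ^ 2)
        - pds j (fun y => A y j) x := fun j => by
    rw [pd_drift hI (hη.log hη0) hA hB ht, hη.pd_pd_log hI ht (fun y => hη0 y t ht)]
  have hBx : ∀ j, B x t j = hbar * (pd j η x t / η x t) - A x j := fun j => by
    rw [hB, hη.pd_log hI ht (hη0 x t ht)]
  have hPDEx := hPDE x t ht
  have hηx := hη0 x t ht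
  rw [hη.pt_log hI ht hηx]
  simp only [hdivB, hBx]
  unfold lap at hPDEx
  simp only [Fin.sum_univ_three] at hPDEx ⊢
  field_simp
  linear_combination (2 * η x t) * hPDEx

theorem eulerLagrange_of_hamiltonJacobi {hbar : ℝ} {V : (Fin 3 → ℝ) → ℝ}
    {A : (Fin 3 → ℝ) → Fin 3 → ℝ} (hA : ContDiff ℝ (⊤ : ℕ∞) A) {I : Set ℝ} (hI : IsOpen I)
    {F : (Fin 3 → ℝ) → ℝ → ℝ} (hF : SpaceTimeSmooth I F) {B : (Fin 3 → ℝ) → ℝ → Fin 3 → ℝ}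
    (hB : ∀ x t i, B x t i = hbar * pd i F x t - A x i)
    (hHJB : ∀ x, ∀ t ∈ I,
      hbar * pt F x t + (∑ j, B x t j ^ 2) / 2 + hbar / 2 * ∑ j, pd j (fun y s => B y s j) x t
        = V x) :
    ∀ x, ∀ t ∈ I, ∀ i,
      pt (fun y s => B y s i) x t
        + (∑ j, B x t j * pd j (fun y s => B y s i) x t)
        + (hbar / 2) * lap (fun y s => B y s i) x t
      = pds i V x
        + (∑ j, B x t j * (pds i (fun y => A y j) x - pds j (fun y => A y i) x))
        + (hbar / 2) * (pds i (fun y => ∑ j, pds j (fun z => A z j) y) x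
            - ∑ j, pds j (pds j (fun y => A y i)) x) := by
  intro x t ht i
  have hE := pd_hamiltonJacobi hI hF hA hB hHJB x ht i
  have hcurl : ∑ j, B x t j * pd i (fun y s => B y s j) x t = ∑ j, B x t j *
      (pd j (fun y s => B y s i) x t + pds j (fun y => A y i) x - pds i (fun y => A y j) x) :=
    Finset.sum_congr rfl fun j _ => congrArg _ (pd_drift_swap hI hF hA hB ht i j)
  have hdiv : ∑ j, pd i (pd j (fun y s => B y s j)) x t
      = ∑ j, (pd j (pd j (fun y s => B y s i)) x t + pds j (pds j (fun y => A y i)) x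
          - pds i (pds j (fun y => A y j)) x) :=
    Finset.sum_congr rfl fun j _ => pd_pd_drift_swap hI hF hA hB ht i j
  rw [hcurl, hdiv] at hE
  rw [pt_drift hI hF hB ht, pds_sum (fun j => contDiff_pds (contDiff_pi.mp hA j) j)]
  unfold lap
  simp only [Fin.sum_univ_three] at hE ⊢
  linear_combination hE

theorem stochastic_euler_lagrange_with_vector_potential_general
    (hbar : ℝ)
    (V : (Fin 3 → ℝ) → ℝ)
    (A : (Fin 3 → ℝ) → Fin 3 → ℝ) (hA : ContDiff ℝ (⊤ : ℕ∞) A)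
    (I : Set ℝ) (hI : IsOpen I)
    (η : (Fin 3 → ℝ) → ℝ → ℝ)
    (hηsmooth : ContDiffOn ℝ (⊤ : ℕ∞) (fun p : (Fin 3 → ℝ) × ℝ => η p.1 p.2) (univ ×ˢ I))
    (hηpos : ∀ x, ∀ t ∈ I, 0 < η x t)
    (hPDE : ∀ x, ∀ t ∈ I,
      hbar * pt η x t =
        -(hbar ^ 2 / 2) * lap η x t + hbar * (∑ j, A x j * pd j η x t)
          + (hbar / 2) * (∑ j, pds j (fun y => A y j) x) * η x t
          - (1 / 2) * (∑ j, (A x j) ^ 2) * η x t + V x * η x t)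
    (B : (Fin 3 → ℝ) → ℝ → Fin 3 → ℝ)
    (hB : ∀ x t i, B x t i = hbar * pd i (fun y s => Real.log (η y s)) x t - A x i) :
    ∀ x, ∀ t ∈ I, ∀ i,
      pt (fun y s => B y s i) x t
        + (∑ j, B x t j * pd j (fun y s => B y s i) x t)
        + (hbar / 2) * lap (fun y s => B y s i) x t
      = pds i V x
        + (∑ j, B x t j * (pds i (fun y => A y j) x - pds j (fun y => A y i) x))
        + (hbar / 2) * (pds i (fun y => ∑ j, pds j (fun z => A z j) y) x
            - ∑ j, pds j (pds j (fun y => A y i)) x) := by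
  have hη0 : ∀ x, ∀ t ∈ I, η x t ≠ 0 := fun x t ht => (hηpos x t ht).ne'
  exact eulerLagrange_of_hamiltonJacobi hA hI (SpaceTimeSmooth.log hηsmooth hη0) hB
    (hamiltonJacobi_of_schrodinger hA hI hηsmooth hη0 hPDE hB)

/-- **Stochastic Euler–Lagrange equation at the level of drift fields** (case with a
vector potential `A`).  If `η > 0` is smooth on `ℝ³ × I` and solves
`ħ ∂η/∂t = −(ħ²/2)Δη + ħ A·∇η + (ħ/2)(∇·A)η − (1/2)|A|²η + Vη`, then the forward drift
`B := ħ∇log η − A` satisfies, componentwise,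
`∂B_i/∂t + (B·∇)B_i + (ħ/2)ΔB_i
   = ∂V/∂x_i + Σ_j B_j(∂A_j/∂x_i − ∂A_j/∂x_j) + (ħ/2)(∂(∇·A)/∂x_i − ΔA_i)`. -/
theorem stochastic_euler_lagrange_with_vector_potential
    (hbar : ℝ) (hhbar : 0 < hbar)
    (V : (Fin 3 → ℝ) → ℝ) (hV : ContDiff ℝ (⊤ : ℕ∞) V)
    (A : (Fin 3 → ℝ) → Fin 3 → ℝ) (hA : ContDiff ℝ (⊤ : ℕ∞) A)
    (I : Set ℝ) (hI : IsOpen I)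
    (η : (Fin 3 → ℝ) → ℝ → ℝ)
    (hηsmooth : ContDiffOn ℝ (⊤ : ℕ∞) (fun p : (Fin 3 → ℝ) × ℝ => η p.1 p.2) (univ ×ˢ I))
    (hηpos : ∀ x, ∀ t ∈ I, 0 < η x t)
    (hPDE : ∀ x, ∀ t ∈ I,
      hbar * pt η x t =
        -(hbar ^ 2 / 2) * lap η x t + hbar * (∑ j, A x j * pd j η x t)
          + (hbar / 2) * (∑ j, pds j (fun y => A y j) x) * η x t
          - (1 / 2) * (∑ j, (A x j) ^ 2) * η x t + V x * η x t)
    (B : (Fin 3 → ℝ) → ℝ → Fin 3 → ℝ)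
    (hB : ∀ x t i, B x t i = hbar * pd i (fun y s => Real.log (η y s)) x t - A x i) :
    ∀ x, ∀ t ∈ I, ∀ i,
      pt (fun y s => B y s i) x t
        + (∑ j, B x t j * pd j (fun y s => B y s i) x t)
        + (hbar / 2) * lap (fun y s => B y s i) x t
      = pds i V x
        + (∑ j, B x t j * (pds i (fun y => A y j) x - pds j (fun y => A y i) x))
        + (hbar / 2) * (pds i (fun y => ∑ j, pds j (fun z => A z j) y) x
            - ∑ j, pds j (pds j (fun y => A y i)) x) :=
  stochastic_euler_lagrange_with_vector_potential_general hbar V A hA I hI η hηsmooth hηpos hPDE B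
    hB
end
end

section
/- Let ħ > 0, let V : ℝ³ → ℝ be smooth, and let η* : ℝ³ × I → ℝ be a smooth strictly positive function on an open time interval I satisfying the adjoint (forward) heat equation with potential V: −ħ ∂η*/∂t = −(ħ²/2) Δη* + V η*. Define the backward drift B* := −ħ ∇ log η*. Then ∂B*/∂t + (B*·∇)B* − (ħ/2) ΔB* = ∇V. -/
open MeasureTheory Real Set

noncomputable section

/-!
The Hopf–Cole substitution `L = log η*` turns the linear equation for `η*` into the
Hamilton–Jacobi equation `ħ ∂ₜL = (ħ²/2)(ΔL + |∇L|²) − V`. Differentiating it in `xᵢ` and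
commuting partial derivatives gives the claim for `B* = −ħ∇L`: the transport term
`(B*·∇)B*ᵢ = ħ² ∇L·∇∂ᵢL` is exactly `(ħ²/2) ∂ᵢ|∇L|²`.
-/

open Function (uncurry)
open scoped Topology

section DirDeriv

variable {E : Type*} [NormedAddCommGroup E] [NormedSpace ℝ E] {U : Set E} {F G H : E → ℝ} {p : E}

def dirDeriv (v : E) (G : E → ℝ) : E → ℝ := fun p => fderiv ℝ G p v

def dirLaplacian {ι : Type*} [Fintype ι] (e : ι → E) (G : E → ℝ) : E → ℝ :=
  fun p => ∑ j, dirDeriv (e j) (dirDeriv (e j) G) p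

theorem ContDiffOn.dirDeriv {m n : WithTop ℕ∞} (hG : ContDiffOn ℝ n G U) (hU : IsOpen U)
    (hmn : m + 1 ≤ n) (v : E) : ContDiffOn ℝ m (dirDeriv v G) U :=
  (hG.fderiv_of_isOpen hU hmn).clm_apply contDiffOn_const

theorem ContDiffOn.differentiableAt_of_isOpen {n : WithTop ℕ∞} (hG : ContDiffOn ℝ n G U)
    (hn : n ≠ 0) (hU : IsOpen U) (hp : p ∈ U) : DifferentiableAt ℝ G p :=
  (hG.differentiableOn hn).differentiableAt (hU.mem_nhds hp)

theorem Set.EqOn.dirDeriv (h : EqOn G H U) (hU : IsOpen U) (v : E) :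
    EqOn (dirDeriv v G) (dirDeriv v H) U := fun _ hq => by
  simp only [_root_.dirDeriv, (h.eventuallyEq_of_mem (hU.mem_nhds hq)).fderiv_eq]

theorem ContDiffOn.dirDeriv_comm (hG : ContDiffOn ℝ 2 G U) (hU : IsOpen U) (v w : E) :
    EqOn (_root_.dirDeriv v (_root_.dirDeriv w G)) (_root_.dirDeriv w (_root_.dirDeriv v G)) U := by
  intro p hp
  have hG' : ContDiffAt ℝ 2 G p := hG.contDiffAt (hU.mem_nhds hp)
  have hD : DifferentiableAt ℝ (fderiv ℝ G) p :=
    (hG'.fderiv_right (m := 1) le_rfl).differentiableAt one_ne_zero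
  have key : ∀ a b, _root_.dirDeriv a (_root_.dirDeriv b G) p = fderiv ℝ (fderiv ℝ G) p a b := by
    intro a b
    change fderiv ℝ (fun q => fderiv ℝ G q b) p a = _
    simp [fderiv_clm_apply hD (differentiableAt_const b)]
  rw [key, key, hG'.isSymmSndFDerivAt (by simp)]

theorem dirDeriv_const_mul (hG : DifferentiableAt ℝ G p) (c : ℝ) (v : E) :
    dirDeriv v (fun q => c * G q) p = c * dirDeriv v G p := by
  simp [dirDeriv, fderiv_const_mul hG]

theorem dirDeriv_neg (v : E) : dirDeriv v (fun q => -G q) p = -dirDeriv v G p := by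
  simp [dirDeriv]

theorem dirDeriv_mul (hG : DifferentiableAt ℝ G p) (hH : DifferentiableAt ℝ H p) (v : E) :
    dirDeriv v (fun q => G q * H q) p = dirDeriv v G p * H p + G p * dirDeriv v H p := by
  simp only [dirDeriv, fderiv_fun_mul hG hH, add_apply, smul_apply, smul_eq_mul]
  ring

theorem dirDeriv_pow (hG : DifferentiableAt ℝ G p) (n : ℕ) (v : E) :
    dirDeriv v (fun q => G q ^ n) p = n * G p ^ (n - 1) * dirDeriv v G p := by
  simp [dirDeriv, fderiv_fun_pow n hG]

theorem dirDeriv_add (hG : DifferentiableAt ℝ G p) (hH : DifferentiableAt ℝ H p) (v : E) :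
    dirDeriv v (fun q => G q + H q) p = dirDeriv v G p + dirDeriv v H p := by
  simp [dirDeriv, fderiv_fun_add hG hH]

theorem dirDeriv_sub (hG : DifferentiableAt ℝ G p) (hH : DifferentiableAt ℝ H p) (v : E) :
    dirDeriv v (fun q => G q - H q) p = dirDeriv v G p - dirDeriv v H p := by
  simp [dirDeriv, fderiv_fun_sub hG hH]

theorem dirDeriv_sum {ι : Type*} {s : Finset ι} {G : ι → E → ℝ}
    (hG : ∀ j ∈ s, DifferentiableAt ℝ (G j) p) (v : E) :
    dirDeriv v (fun q => ∑ j ∈ s, G j q) p = ∑ j ∈ s, dirDeriv v (G j) p := by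
  simp [dirDeriv, fderiv_fun_sum hG]

theorem dirDeriv_log (hF : DifferentiableAt ℝ F p) (hp : F p ≠ 0) (v : E) :
    dirDeriv v (fun q => Real.log (F q)) p = dirDeriv v F p / F p := by
  simp [dirDeriv, (hF.hasFDerivAt.log hp).fderiv, div_eq_inv_mul]

theorem deriv_comp_eq_dirDeriv {f : E → ℝ} {γ : ℝ → E} {s : ℝ} {v : E} (hγ : HasDerivAt γ v s)
    (hfG : f =ᶠ[𝓝 (γ s)] G) (hG : DifferentiableAt ℝ G (γ s)) :
    deriv (f ∘ γ) s = dirDeriv v G (γ s) :=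
  ((hG.hasFDerivAt.comp_hasDerivAt s hγ).congr_of_eventuallyEq
    (hfG.comp_tendsto hγ.continuousAt)).deriv

end DirDeriv

section HopfCole

variable {E : Type*} [NormedAddCommGroup E] [NormedSpace ℝ E] {ι : Type*}
  (e : ι → E) (τ : E) {U : Set E} {L W : E → ℝ} {p : E} {ħ : ℝ}

def backwardDrift (ħ : ℝ) (L : E → ℝ) (j : ι) : E → ℝ := fun q => -(ħ * dirDeriv (e j) L q)

theorem ContDiffOn.dirLaplacian [Fintype ι] {m n : WithTop ℕ∞} (hL : ContDiffOn ℝ n L U)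
    (hU : IsOpen U) (hmn : m + 2 ≤ n) : ContDiffOn ℝ m (dirLaplacian e L) U :=
  ContDiffOn.sum fun j _ => ((hL.dirDeriv hU (m := m + 1) (by rwa [add_assoc]) (e j)).dirDeriv
    hU le_rfl (e j))

theorem ContDiffOn.backwardDrift {m n : WithTop ℕ∞} (hL : ContDiffOn ℝ n L U) (hU : IsOpen U)
    (hmn : m + 1 ≤ n) (j : ι) : ContDiffOn ℝ m (backwardDrift e ħ L j) U :=
  (contDiffOn_const.mul (hL.dirDeriv hU hmn (e j))).neg

theorem hamiltonJacobi_of_heat [Fintype ι] {F : E → ℝ} (hU : IsOpen U) (hF : ContDiffOn ℝ 2 F U)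
    (hpos : ∀ q ∈ U, 0 < F q)
    (hheat : ∀ q ∈ U, -(ħ * dirDeriv τ F q) = -(ħ ^ 2 / 2) * dirLaplacian e F q + W q * F q) :
    EqOn (fun q => ħ * dirDeriv τ (fun q => Real.log (F q)) q)
      (fun q => ħ ^ 2 / 2 * (dirLaplacian e (fun q => Real.log (F q)) q
          + ∑ j, dirDeriv (e j) (fun q => Real.log (F q)) q ^ 2) - W q) U := by
  intro q hq
  set L := fun q => Real.log (F q)
  have hL : ContDiffOn ℝ 2 L U := hF.log fun q hq => (hpos q hq).ne'
  have hFL : ∀ v, EqOn (dirDeriv v F) (fun q => F q * dirDeriv v L q) U := fun v q hq => by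
    change _ = F q * dirDeriv v (fun q => Real.log (F q)) q
    rw [dirDeriv_log (hF.differentiableAt_of_isOpen two_ne_zero hU hq) (hpos q hq).ne']
    field_simp [(hpos q hq).ne']
  have hFLL : ∀ v, dirDeriv v (dirDeriv v F) q
      = F q * (dirDeriv v (dirDeriv v L) q + dirDeriv v L q ^ 2) := fun v => by
    rw [(hFL v).dirDeriv hU v hq, dirDeriv_mul (hF.differentiableAt_of_isOpen two_ne_zero hU hq)
      ((hL.dirDeriv hU (m := 1) (by norm_num) v).differentiableAt_of_isOpen one_ne_zero hU hq),
      hFL v hq]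
    ring
  have h := hheat q hq
  simp only [dirLaplacian, hFL τ hq, hFLL, ← Finset.mul_sum, Finset.sum_add_distrib] at h ⊢
  apply mul_left_cancel₀ (hpos q hq).ne'
  linear_combination (-1 : ℝ) * h

theorem dirDeriv_dirLaplacian_comm [Fintype ι] (hL : ContDiffOn ℝ 3 L U) (hU : IsOpen U)
    (hp : p ∈ U) (v : E) : dirDeriv v (dirLaplacian e L) p = dirLaplacian e (dirDeriv v L) p := by
  have hL1 : ∀ w, ContDiffOn ℝ 2 (dirDeriv w L) U := fun w => hL.dirDeriv hU (by norm_num) w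
  change dirDeriv v (fun q => ∑ j, dirDeriv (e j) (dirDeriv (e j) L) q) p = _
  rw [dirDeriv_sum fun j _ => ((hL1 (e j)).dirDeriv hU (m := 1) (by norm_num) (e j))
    |>.differentiableAt_of_isOpen one_ne_zero hU hp]
  refine Finset.sum_congr rfl fun j _ => ?_
  rw [(hL1 (e j)).dirDeriv_comm hU v (e j) hp,
    ((hL.of_le (by norm_num)).dirDeriv_comm hU v (e j)).dirDeriv hU (e j) hp]

theorem dirDeriv_sum_sq_dirDeriv [Fintype ι] (hL : ContDiffOn ℝ 2 L U) (hU : IsOpen U)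
    (hp : p ∈ U) (v : E) :
    dirDeriv v (fun q => ∑ j, dirDeriv (e j) L q ^ 2) p
      = 2 * ∑ j, dirDeriv (e j) L p * dirDeriv (e j) (dirDeriv v L) p := by
  have hL1 : ∀ w, DifferentiableAt ℝ (dirDeriv w L) p := fun w =>
    (hL.dirDeriv hU (m := 1) (by norm_num) w).differentiableAt_of_isOpen one_ne_zero hU hp
  rw [dirDeriv_sum (G := fun j q => dirDeriv (e j) L q ^ 2) fun j _ => (hL1 (e j)).pow 2,
    Finset.mul_sum]
  refine Finset.sum_congr rfl fun j _ => ?_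
  rw [dirDeriv_pow (hL1 (e j)), hL.dirDeriv_comm hU v (e j) hp]
  ring

theorem dirDeriv_hamiltonJacobi [Fintype ι] (hU : IsOpen U) (hL : ContDiffOn ℝ 3 L U)
    (hHJ : EqOn (fun q => ħ * dirDeriv τ L q)
      (fun q => ħ ^ 2 / 2 * (dirLaplacian e L q + ∑ j, dirDeriv (e j) L q ^ 2) - W q) U)
    (hW : DifferentiableAt ℝ W p) (hp : p ∈ U) (v : E) :
    ħ * dirDeriv τ (dirDeriv v L) p
      = ħ ^ 2 / 2 * (dirLaplacian e (dirDeriv v L) p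
          + 2 * ∑ j, dirDeriv (e j) L p * dirDeriv (e j) (dirDeriv v L) p) - dirDeriv v W p := by
  have hL1 : ∀ w, DifferentiableAt ℝ (dirDeriv w L) p := fun w =>
    (hL.dirDeriv hU (m := 2) (by norm_num) w).differentiableAt_of_isOpen two_ne_zero hU hp
  have hΔ : DifferentiableAt ℝ (dirLaplacian e L) p :=
    (hL.dirLaplacian e hU (m := 1) (by norm_num)).differentiableAt_of_isOpen one_ne_zero hU hp
  have hS : DifferentiableAt ℝ (fun q => ∑ j, dirDeriv (e j) L q ^ 2) p :=
    DifferentiableAt.fun_sum fun j _ => (hL1 (e j)).pow 2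
  have h := hHJ.dirDeriv hU v hp
  rwa [dirDeriv_const_mul (hL1 τ), dirDeriv_sub ((hΔ.fun_add hS).const_mul _) hW,
    dirDeriv_const_mul (hΔ.fun_add hS), dirDeriv_add hΔ hS, dirDeriv_dirLaplacian_comm e hL hU hp,
    dirDeriv_sum_sq_dirDeriv e (hL.of_le (by norm_num)) hU hp,
    (hL.of_le (by norm_num)).dirDeriv_comm hU v τ hp] at h

theorem backwardDrift_eulerLagrange [Fintype ι] (hU : IsOpen U) (hL : ContDiffOn ℝ 3 L U)
    (hHJ : EqOn (fun q => ħ * dirDeriv τ L q)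
      (fun q => ħ ^ 2 / 2 * (dirLaplacian e L q + ∑ j, dirDeriv (e j) L q ^ 2) - W q) U)
    (hW : DifferentiableAt ℝ W p) (hp : p ∈ U) (i : ι) :
    dirDeriv τ (backwardDrift e ħ L i) p
      + ∑ j, backwardDrift e ħ L j p * dirDeriv (e j) (backwardDrift e ħ L i) p
      - ħ / 2 * dirLaplacian e (backwardDrift e ħ L i) p = dirDeriv (e i) W p := by
  have hB : ∀ v, EqOn (dirDeriv v (backwardDrift e ħ L i))
      (fun q => -(ħ * dirDeriv v (dirDeriv (e i) L) q)) U := fun v q hq => by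
    unfold backwardDrift
    rw [dirDeriv_neg, dirDeriv_const_mul
      ((hL.dirDeriv hU (m := 2) (by norm_num) _).differentiableAt_of_isOpen two_ne_zero hU hq)]
  have hΔB : dirLaplacian e (backwardDrift e ħ L i) p
      = -(ħ * dirLaplacian e (dirDeriv (e i) L) p) := by
    simp only [dirLaplacian, Finset.mul_sum, ← Finset.sum_neg_distrib]
    refine Finset.sum_congr rfl fun j _ => ?_
    rw [(hB (e j)).dirDeriv hU (e j) hp, dirDeriv_neg, dirDeriv_const_mul
      (((hL.dirDeriv hU (m := 2) (by norm_num) _).dirDeriv hU (m := 1) (by norm_num) _)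
        |>.differentiableAt_of_isOpen one_ne_zero hU hp)]
  have hsum : ∑ j, -(ħ * dirDeriv (e j) L p) * -(ħ * dirDeriv (e j) (dirDeriv (e i) L) p)
      = ħ ^ 2 * ∑ j, dirDeriv (e j) L p * dirDeriv (e j) (dirDeriv (e i) L) p := by
    rw [Finset.mul_sum]
    exact Finset.sum_congr rfl fun j _ => by ring
  rw [hB τ hp, hΔB]
  simp only [backwardDrift, fun j => hB (e j) hp, hsum]
  linear_combination (-1 : ℝ) * dirDeriv_hamiltonJacobi e τ hU hL hHJ hW hp (e i)

end HopfCole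

section SpaceTime

def spaceDir (i : Fin 3) : (Fin 3 → ℝ) × ℝ := (Pi.single i 1, 0)

def timeDir : (Fin 3 → ℝ) × ℝ := (0, 1)

variable {f : (Fin 3 → ℝ) → ℝ → ℝ} {G : (Fin 3 → ℝ) × ℝ → ℝ} {U : Set ((Fin 3 → ℝ) × ℝ)}
  {x : Fin 3 → ℝ} {t : ℝ}

theorem pd_eq_dirDeriv (hfG : uncurry f =ᶠ[𝓝 (x, t)] G) (hG : DifferentiableAt ℝ G (x, t))
    (i : Fin 3) : pd i f x t = dirDeriv (spaceDir i) G (x, t) := by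
  have hγ : HasDerivAt (fun s => (Function.update x i s, t)) (spaceDir i) (x i) :=
    (hasDerivAt_update x i (x i)).prodMk (hasDerivAt_const _ _)
  have hx : (Function.update x i (x i), t) = (x, t) := by simp
  rw [← hx] at hfG hG ⊢
  exact deriv_comp_eq_dirDeriv hγ hfG hG

theorem pt_eq_dirDeriv (hfG : uncurry f =ᶠ[𝓝 (x, t)] G) (hG : DifferentiableAt ℝ G (x, t)) :
    pt f x t = dirDeriv timeDir G (x, t) :=
  deriv_comp_eq_dirDeriv ((hasDerivAt_const t x).prodMk (hasDerivAt_id t)) hfG hG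

theorem pds_eq_dirDeriv {V : (Fin 3 → ℝ) → ℝ} (hV : DifferentiableAt ℝ V x) (t : ℝ) (i : Fin 3) :
    pds i V x = dirDeriv (spaceDir i) (fun q => V q.1) (x, t) :=
  pd_eq_dirDeriv (f := fun y _ => V y) .rfl (hV.comp _ differentiableAt_fst) i

theorem Set.EqOn.pd (hfG : EqOn (uncurry f) G U) (hU : IsOpen U) (hG : DifferentiableOn ℝ G U)
    (i : Fin 3) : EqOn (uncurry (_root_.pd i f)) (_root_.dirDeriv (spaceDir i) G) U := fun _ hq =>
  pd_eq_dirDeriv (hfG.eventuallyEq_of_mem (hU.mem_nhds hq)) (hG.differentiableAt (hU.mem_nhds hq)) i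

theorem Set.EqOn.pt (hfG : EqOn (uncurry f) G U) (hU : IsOpen U) (hG : DifferentiableOn ℝ G U) :
    EqOn (uncurry (_root_.pt f)) (_root_.dirDeriv timeDir G) U := fun _ hq =>
  pt_eq_dirDeriv (hfG.eventuallyEq_of_mem (hU.mem_nhds hq)) (hG.differentiableAt (hU.mem_nhds hq))

theorem Set.EqOn.lap (hfG : EqOn (uncurry f) G U) (hU : IsOpen U) (hG : ContDiffOn ℝ 2 G U) :
    EqOn (uncurry (_root_.lap f)) (dirLaplacian spaceDir G) U := fun q hq => by
  change ∑ i, _root_.pd i (_root_.pd i f) q.1 q.2 = ∑ i, _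
  exact Finset.sum_congr rfl fun i _ => ((hfG.pd hU (hG.differentiableOn two_ne_zero) i).pd hU
    ((hG.dirDeriv hU (m := 1) (by norm_num) _).differentiableOn one_ne_zero) i) hq

theorem pt_add_sum_mul_pd_sub_mul_lap_eq {B : (Fin 3 → ℝ) → ℝ → Fin 3 → ℝ}
    {b : Fin 3 → (Fin 3 → ℝ) × ℝ → ℝ} (hU : IsOpen U) (hb : ∀ j, ContDiffOn ℝ 2 (b j) U)
    (hBb : ∀ j, EqOn (uncurry fun y s => B y s j) (b j) U) (hxt : (x, t) ∈ U) (c : ℝ) (i : Fin 3) :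
    pt (fun y s => B y s i) x t + ∑ j, B x t j * pd j (fun y s => B y s i) x t
        - c * lap (fun y s => B y s i) x t
      = dirDeriv timeDir (b i) (x, t) + ∑ j, b j (x, t) * dirDeriv (spaceDir j) (b i) (x, t)
        - c * dirLaplacian spaceDir (b i) (x, t) := by
  have hbi : DifferentiableOn ℝ (b i) U := (hb i).differentiableOn two_ne_zero
  have hpt : pt (fun y s => B y s i) x t = dirDeriv timeDir (b i) (x, t) :=
    (hBb i).pt hU hbi hxt
  have hpd : ∀ j, pd j (fun y s => B y s i) x t = dirDeriv (spaceDir j) (b i) (x, t) :=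
    fun j => (hBb i).pd hU hbi j hxt
  have hlap : lap (fun y s => B y s i) x t = dirLaplacian spaceDir (b i) (x, t) :=
    (hBb i).lap hU (hb i) hxt
  have hB : ∀ j, B x t j = b j (x, t) := fun j => hBb j hxt
  simp only [hpt, hpd, hlap, hB]

end SpaceTime

theorem backward_stochastic_euler_lagrange_general
    (hbar : ℝ)
    (V : (Fin 3 → ℝ) → ℝ) (hV : ContDiff ℝ (⊤ : ℕ∞) V)
    (I : Set ℝ) (hI : IsOpen I)
    (ηstar : (Fin 3 → ℝ) → ℝ → ℝ)
    (hsmooth : ContDiffOn ℝ (⊤ : ℕ∞) (fun p : (Fin 3 → ℝ) × ℝ => ηstar p.1 p.2) (univ ×ˢ I))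
    (hpos : ∀ x, ∀ t ∈ I, 0 < ηstar x t)
    (hPDE : ∀ x, ∀ t ∈ I,
      -(hbar * pt ηstar x t) = -(hbar ^ 2 / 2) * lap ηstar x t + V x * ηstar x t)
    (Bstar : (Fin 3 → ℝ) → ℝ → Fin 3 → ℝ)
    (hBstar : ∀ x t i, Bstar x t i = -(hbar * pd i (fun y s => Real.log (ηstar y s)) x t)) :
    ∀ x, ∀ t ∈ I, ∀ i,
      pt (fun y s => Bstar y s i) x t
        + (∑ j, Bstar x t j * pd j (fun y s => Bstar y s i) x t)
        - (hbar / 2) * lap (fun y s => Bstar y s i) x t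
      = pds i V x := by
  intro x t ht i
  set U : Set ((Fin 3 → ℝ) × ℝ) := univ ×ˢ I
  have hU : IsOpen U := isOpen_univ.prod hI
  have hη : ContDiffOn ℝ 2 (uncurry ηstar) U := hsmooth.of_le (by norm_cast)
  have hηpos : ∀ q ∈ U, 0 < uncurry ηstar q := fun q hq => hpos q.1 q.2 (mem_prod.1 hq).2
  have hheat : ∀ q ∈ U, -(hbar * dirDeriv timeDir (uncurry ηstar) q)
      = -(hbar ^ 2 / 2) * dirLaplacian spaceDir (uncurry ηstar) q + V q.1 * uncurry ηstar q :=
    fun q hq => by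
      rw [← (eqOn_refl (uncurry ηstar) U).pt hU (hη.differentiableOn two_ne_zero) hq,
        ← (eqOn_refl (uncurry ηstar) U).lap hU hη hq]
      exact hPDE q.1 q.2 (mem_prod.1 hq).2
  set L := uncurry fun y s => Real.log (ηstar y s)
  have hL : ContDiffOn ℝ 3 L U := (hsmooth.log fun q hq => (hηpos q hq).ne').of_le (by norm_cast)
  have hB : ∀ j, EqOn (uncurry fun y s => Bstar y s j) (backwardDrift spaceDir hbar L j) U :=
    fun j q hq => by
      rw [backwardDrift, ← (eqOn_refl L U).pd hU (hL.differentiableOn (by norm_num)) j hq]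
      exact hBstar q.1 q.2 j
  have hVx : DifferentiableAt ℝ V x := hV.differentiable (by simp) x
  rw [pt_add_sum_mul_pd_sub_mul_lap_eq hU (fun j => hL.backwardDrift spaceDir hU (by norm_num) j)
    hB ⟨mem_univ x, ht⟩, pds_eq_dirDeriv hVx t i]
  exact backwardDrift_eulerLagrange spaceDir timeDir hU hL
    (hamiltonJacobi_of_heat spaceDir timeDir hU hη hηpos hheat)
    (hVx.comp _ differentiableAt_fst) ⟨mem_univ x, ht⟩ i

/-- **Backward stochastic Euler–Lagrange equation** (case `A = 0`).  If `η* > 0` is smooth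
on `ℝ³ × I` and solves the adjoint (forward) heat equation with potential `V`,
`−ħ ∂η*/∂t = −(ħ²/2)Δη* + Vη*`, then the backward drift `B* := −ħ∇log η*` satisfies
`∂B*/∂t + (B*·∇)B* − (ħ/2)ΔB* = ∇V`. -/
theorem backward_stochastic_euler_lagrange
    (hbar : ℝ) (hhbar : 0 < hbar)
    (V : (Fin 3 → ℝ) → ℝ) (hV : ContDiff ℝ (⊤ : ℕ∞) V)
    (I : Set ℝ) (hI : IsOpen I)
    (ηstar : (Fin 3 → ℝ) → ℝ → ℝ)
    (hsmooth : ContDiffOn ℝ (⊤ : ℕ∞) (fun p : (Fin 3 → ℝ) × ℝ => ηstar p.1 p.2) (univ ×ˢ I))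
    (hpos : ∀ x, ∀ t ∈ I, 0 < ηstar x t)
    (hPDE : ∀ x, ∀ t ∈ I,
      -(hbar * pt ηstar x t) = -(hbar ^ 2 / 2) * lap ηstar x t + V x * ηstar x t)
    (Bstar : (Fin 3 → ℝ) → ℝ → Fin 3 → ℝ)
    (hBstar : ∀ x t i, Bstar x t i = -(hbar * pd i (fun y s => Real.log (ηstar y s)) x t)) :
    ∀ x, ∀ t ∈ I, ∀ i,
      pt (fun y s => Bstar y s i) x t
        + (∑ j, Bstar x t j * pd j (fun y s => Bstar y s i) x t)
        - (hbar / 2) * lap (fun y s => Bstar y s i) x t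
      = pds i V x :=
  backward_stochastic_euler_lagrange_general hbar V hV I hI ηstar hsmooth hpos hPDE Bstar hBstar
end
end

section
/- (Lie symmetry of the backward heat equation.) Let ħ > 0 and let V : ℝ³ × ℝ → ℝ be smooth. Suppose T = T(t), Q = Q(x,t) ∈ ℝ³ and φ = φ(x,t) are smooth functions satisfying the determining equations: dT/dt = 2 ∂Q_i/∂x_i for each i = 1,2,3; ∂Q_i/∂x_j + ∂Q_j/∂x_i = 0 for all i ≠ j; ∂Q_i/∂t = ∂φ/∂x_i for each i; and ∂φ/∂t + (ħ/2)Δφ = (dT/dt) V + Q·∇V + T ∂V/∂t. Define the operator Ĥ := ħ ∂/∂t + (ħ²/2)Δ − V and N := T ∂/∂t + Q·∇ − (1/ħ)φ. Then for every smooth η : ℝ³ × ℝ → ℝ with Ĥη = 0, one also has Ĥ(Nη) = 0. -/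
open MeasureTheory Real Set

noncomputable section

/-!
With `Ĥ = ħ∂ₜ + (ħ²/2)Δ - V` and `N = T∂ₜ + Q·∇ - φ/ħ`, the determining equations say exactly
that `[Ĥ, N] = T'Ĥ`, i.e. `Ĥ(Nη) = N(Ĥη) + T'·Ĥη` for every smooth `η`; so `N` preserves the
kernel of `Ĥ`. To compute `Ĥ(Nη)` one uses the Leibniz rule for `Ĥ` and the fact that `∂ₜ` and
`∂ᵢ` commute with `Ĥ` up to multiplication by `∂ₜV` and `∂ᵢV`. The terms in `∂ₜQᵢ` then cancel
those in `∂ᵢφ`, the equation for `∂ₜφ + (ħ/2)Δφ` absorbs all zeroth order terms, and since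
`∂ⱼQᵢ + ∂ᵢQⱼ = T'δᵢⱼ` (which also forces `ΔQᵢ = 0`) the second order term
`ħ² ∑ᵢⱼ ∂ⱼQᵢ ∂ᵢ∂ⱼη` equals `(ħ²/2)T'Δη`.
-/

open Function

namespace BackwardHeat

abbrev SpaceTimeFun : Type := (Fin 3 → ℝ) → ℝ → ℝ

def IsSmooth (f : SpaceTimeFun) : Prop := ContDiff ℝ (⊤ : ℕ∞) (uncurry f)

def timeDir : (Fin 3 → ℝ) × ℝ := (0, 1)

def spaceDir (i : Fin 3) : (Fin 3 → ℝ) × ℝ := (Pi.single i 1, 0)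

section Calculus

variable {f g : SpaceTimeFun} {i j : Fin 3}

theorem contDiff_fderiv_apply {E F : Type*} [NormedAddCommGroup E] [NormedSpace ℝ E]
    [NormedAddCommGroup F] [NormedSpace ℝ F] {G : E → F} (hG : ContDiff ℝ (⊤ : ℕ∞) G) (v : E) :
    ContDiff ℝ (⊤ : ℕ∞) (fun p => fderiv ℝ G p v) :=
  (hG.fderiv_right (m := (⊤ : ℕ∞)) (by exact_mod_cast le_top)).clm_apply contDiff_const

theorem fderiv_fderiv_apply_comm {E F : Type*} [NormedAddCommGroup E] [NormedSpace ℝ E]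
    [NormedAddCommGroup F] [NormedSpace ℝ F] {G : E → F} (hG : ContDiff ℝ (⊤ : ℕ∞) G)
    (v w p : E) :
    fderiv ℝ (fun q => fderiv ℝ G q v) p w = fderiv ℝ (fun q => fderiv ℝ G q w) p v := by
  have hG' : Differentiable ℝ (fderiv ℝ G) :=
    (hG.fderiv_right (m := (⊤ : ℕ∞)) (by exact_mod_cast le_top)).differentiable (by simp)
  have happly : ∀ a b, fderiv ℝ (fun q => fderiv ℝ G q a) p b = fderiv ℝ (fderiv ℝ G) p b a :=
    fun a b => by simp [fderiv_clm_apply (hG' p) (differentiableAt_const a)]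
  rw [happly, happly]
  have h2 : minSmoothness ℝ 2 ≤ ((⊤ : ℕ∞) : WithTop ℕ∞) := by
    rw [minSmoothness_of_isRCLikeNormedField]
    exact WithTop.coe_le_coe.2 le_top
  exact (hG.contDiffAt.isSymmSndFDerivAt h2).eq w v

theorem IsSmooth.differentiable (hf : IsSmooth f) : Differentiable ℝ (uncurry f) :=
  ContDiff.differentiable hf (by simp)

theorem IsSmooth.hasDerivAt_time (hf : IsSmooth f) (x : Fin 3 → ℝ) (t : ℝ) :
    HasDerivAt (f x) (fderiv ℝ (uncurry f) (x, t) timeDir) t :=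
  (hf.differentiable (x, t)).hasFDerivAt.comp_hasDerivAt t
    ((hasDerivAt_const t x).prodMk (hasDerivAt_id t))

theorem IsSmooth.hasDerivAt_coord (hf : IsSmooth f) (i : Fin 3) (x : Fin 3 → ℝ) (t s : ℝ) :
    HasDerivAt (fun s => f (update x i s) t)
      (fderiv ℝ (uncurry f) (update x i s, t) (spaceDir i)) s :=
  (hf.differentiable (update x i s, t)).hasFDerivAt.comp_hasDerivAt
    (f := fun s => (update x i s, t)) s ((hasDerivAt_update x i s).prodMk (hasDerivAt_const s t))

theorem IsSmooth.pt_eq_fderiv (hf : IsSmooth f) (x : Fin 3 → ℝ) (t : ℝ) :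
    pt f x t = fderiv ℝ (uncurry f) (x, t) timeDir :=
  (hf.hasDerivAt_time x t).deriv

theorem IsSmooth.pd_eq_fderiv (hf : IsSmooth f) (x : Fin 3 → ℝ) (t : ℝ) :
    pd i f x t = fderiv ℝ (uncurry f) (x, t) (spaceDir i) := by
  have := (hf.hasDerivAt_coord i x t (x i)).deriv
  rwa [update_eq_self] at this

theorem IsSmooth.differentiableAt_time (hf : IsSmooth f) (x : Fin 3 → ℝ) (t : ℝ) :
    DifferentiableAt ℝ (f x) t :=
  (hf.hasDerivAt_time x t).differentiableAt

theorem IsSmooth.differentiableAt_coord (hf : IsSmooth f) (i : Fin 3) (x : Fin 3 → ℝ)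
    (t s : ℝ) :
    DifferentiableAt ℝ (fun s => f (update x i s) t) s :=
  (hf.hasDerivAt_coord i x t s).differentiableAt

theorem IsSmooth.uncurry_pt (hf : IsSmooth f) :
    uncurry (pt f) = fun p => fderiv ℝ (uncurry f) p timeDir :=
  funext fun p => hf.pt_eq_fderiv p.1 p.2

theorem IsSmooth.uncurry_pd (hf : IsSmooth f) (i : Fin 3) :
    uncurry (pd i f) = fun p => fderiv ℝ (uncurry f) p (spaceDir i) :=
  funext fun p => hf.pd_eq_fderiv p.1 p.2

theorem isSmooth_pt (hf : IsSmooth f) : IsSmooth (pt f) := by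
  rw [IsSmooth, hf.uncurry_pt]
  exact contDiff_fderiv_apply hf _

theorem isSmooth_pd (hf : IsSmooth f) (i : Fin 3) : IsSmooth (pd i f) := by
  rw [IsSmooth, hf.uncurry_pd]
  exact contDiff_fderiv_apply hf _

theorem IsSmooth.add (hf : IsSmooth f) (hg : IsSmooth g) : IsSmooth (f + g) :=
  ContDiff.add hf hg

theorem IsSmooth.mul (hf : IsSmooth f) (hg : IsSmooth g) : IsSmooth (f * g) :=
  ContDiff.mul hf hg

theorem IsSmooth.const_smul (c : ℝ) (hf : IsSmooth f) : IsSmooth (c • f) :=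
  ContDiff.const_smul c hf

theorem isSmooth_sum {ι : Type*} {s : Finset ι} {f : ι → SpaceTimeFun}
    (hf : ∀ k ∈ s, IsSmooth (f k)) : IsSmooth (∑ k ∈ s, f k) := by
  have : uncurry (∑ k ∈ s, f k) = fun p => ∑ k ∈ s, uncurry (f k) p := by
    funext p; simp only [uncurry, Finset.sum_apply]
  rw [IsSmooth, this]
  exact ContDiff.sum hf

theorem isSmooth_time {c : ℝ → ℝ} (hc : ContDiff ℝ (⊤ : ℕ∞) c) :
    IsSmooth (fun _ t => c t) :=
  hc.comp contDiff_snd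

theorem pt_add (hf : IsSmooth f) (hg : IsSmooth g) : pt (f + g) = pt f + pt g := by
  ext x t; exact deriv_add (hf.differentiableAt_time x t) (hg.differentiableAt_time x t)

theorem pd_add (hf : IsSmooth f) (hg : IsSmooth g) : pd i (f + g) = pd i f + pd i g := by
  ext x t
  exact deriv_add (hf.differentiableAt_coord i x t _) (hg.differentiableAt_coord i x t _)

theorem pt_sub (hf : IsSmooth f) (hg : IsSmooth g) : pt (f - g) = pt f - pt g := by
  ext x t; exact deriv_sub (hf.differentiableAt_time x t) (hg.differentiableAt_time x t)

theorem pd_sub (hf : IsSmooth f) (hg : IsSmooth g) : pd i (f - g) = pd i f - pd i g := by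
  ext x t
  exact deriv_sub (hf.differentiableAt_coord i x t _) (hg.differentiableAt_coord i x t _)

theorem pt_mul (hf : IsSmooth f) (hg : IsSmooth g) : pt (f * g) = pt f * g + f * pt g := by
  ext x t; exact deriv_mul (hf.differentiableAt_time x t) (hg.differentiableAt_time x t)

theorem pd_mul (hf : IsSmooth f) (hg : IsSmooth g) : pd i (f * g) = pd i f * g + f * pd i g := by
  ext x t
  have := deriv_mul (hf.differentiableAt_coord i x t (x i)) (hg.differentiableAt_coord i x t (x i))
  rwa [update_eq_self] at this

theorem pt_const_smul (c : ℝ) (f : SpaceTimeFun) : pt (c • f) = c • pt f := by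
  ext x t; exact congrFun (deriv_const_mul_field' c) t

theorem pd_const_smul (c : ℝ) (f : SpaceTimeFun) : pd i (c • f) = c • pd i f := by
  ext x t; exact congrFun (deriv_const_mul_field' c) (x i)

theorem pt_sum {ι : Type*} {s : Finset ι} {f : ι → SpaceTimeFun}
    (hf : ∀ k ∈ s, IsSmooth (f k)) : pt (∑ k ∈ s, f k) = ∑ k ∈ s, pt (f k) := by
  ext x t
  simp only [pt, Finset.sum_apply]
  exact deriv_sum fun k hk => (hf k hk).differentiableAt_time x t

theorem pd_sum {ι : Type*} {s : Finset ι} {f : ι → SpaceTimeFun}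
    (hf : ∀ k ∈ s, IsSmooth (f k)) : pd i (∑ k ∈ s, f k) = ∑ k ∈ s, pd i (f k) := by
  ext x t
  simp only [pd, Finset.sum_apply]
  exact deriv_fun_sum fun k hk => (hf k hk).differentiableAt_coord i x t _

theorem pt_time (c : ℝ → ℝ) : pt (fun _ t => c t) = fun _ t => deriv c t := rfl

theorem pd_time (c : ℝ → ℝ) : pd i (fun _ t => c t) = 0 := by
  ext x t; simp [pd]

theorem pt_zero : pt 0 = 0 := by
  ext x t; simp [pt]

theorem pd_zero : pd i 0 = 0 := pd_time 0

theorem pt_pd_comm (hf : IsSmooth f) : pt (pd i f) = pd i (pt f) := by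
  ext x t
  rw [(isSmooth_pd hf i).pt_eq_fderiv, (isSmooth_pt hf).pd_eq_fderiv, hf.uncurry_pd,
    hf.uncurry_pt]
  exact fderiv_fderiv_apply_comm hf _ _ _

theorem pd_pd_comm (hf : IsSmooth f) : pd i (pd j f) = pd j (pd i f) := by
  ext x t
  rw [(isSmooth_pd hf j).pd_eq_fderiv, (isSmooth_pd hf i).pd_eq_fderiv, hf.uncurry_pd,
    hf.uncurry_pd]
  exact fderiv_fderiv_apply_comm hf _ _ _

theorem lap_eq_sum (f : SpaceTimeFun) : lap f = ∑ i, pd i (pd i f) := by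
  ext x t; simp [lap, Finset.sum_apply]

theorem isSmooth_lap (hf : IsSmooth f) : IsSmooth (lap f) := by
  rw [lap_eq_sum]
  exact isSmooth_sum fun i _ => isSmooth_pd (isSmooth_pd hf i) i

theorem lap_add (hf : IsSmooth f) (hg : IsSmooth g) : lap (f + g) = lap f + lap g := by
  simp only [lap_eq_sum, pd_add hf hg, pd_add (isSmooth_pd hf _) (isSmooth_pd hg _),
    Finset.sum_add_distrib]

theorem lap_sub (hf : IsSmooth f) (hg : IsSmooth g) : lap (f - g) = lap f - lap g := by
  simp only [lap_eq_sum, pd_sub hf hg, pd_sub (isSmooth_pd hf _) (isSmooth_pd hg _),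
    Finset.sum_sub_distrib]

theorem lap_const_smul (c : ℝ) (f : SpaceTimeFun) : lap (c • f) = c • lap f := by
  simp only [lap_eq_sum, pd_const_smul, Finset.smul_sum]

theorem lap_sum {ι : Type*} {s : Finset ι} {f : ι → SpaceTimeFun}
    (hf : ∀ k ∈ s, IsSmooth (f k)) : lap (∑ k ∈ s, f k) = ∑ k ∈ s, lap (f k) := by
  simp only [lap_eq_sum, pd_sum hf, pd_sum fun k hk => isSmooth_pd (hf k hk) _]
  exact Finset.sum_comm

theorem lap_mul (hf : IsSmooth f) (hg : IsSmooth g) :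
    lap (f * g) = lap f * g + 2 * ∑ i, pd i f * pd i g + f * lap g := by
  simp only [lap_eq_sum, pd_mul hf hg,
    pd_add ((isSmooth_pd hf _).mul hg) (hf.mul (isSmooth_pd hg _)),
    pd_mul (isSmooth_pd hf _) hg, pd_mul hf (isSmooth_pd hg _), Finset.sum_add_distrib]
  rw [← Finset.sum_mul, ← Finset.mul_sum]
  ring

theorem lap_time (c : ℝ → ℝ) : lap (fun _ t => c t) = 0 := by
  ext x t; simp [lap, pd]

theorem pt_lap_comm (hf : IsSmooth f) : pt (lap f) = lap (pt f) := by
  simp only [lap_eq_sum, pt_sum fun i _ => isSmooth_pd (isSmooth_pd hf i) i,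
    pt_pd_comm (isSmooth_pd hf _), pt_pd_comm hf]

theorem pd_lap_comm (hf : IsSmooth f) : pd j (lap f) = lap (pd j f) := by
  simp only [lap_eq_sum, pd_sum fun i _ => isSmooth_pd (isSmooth_pd hf i) i,
    pd_pd_comm (isSmooth_pd hf _) (i := j), pd_pd_comm hf (i := j)]

end Calculus

def heatOp (hbar : ℝ) (V f : SpaceTimeFun) : SpaceTimeFun :=
  hbar • pt f + (hbar ^ 2 / 2) • lap f - V * f

def symmetryOp (hbar : ℝ) (T : ℝ → ℝ) (Q : Fin 3 → SpaceTimeFun) (φ f : SpaceTimeFun) :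
    SpaceTimeFun :=
  (fun _ t => T t) * pt f + ∑ i, Q i * pd i f - (1 / hbar) • (φ * f)

theorem heatOp_apply (hbar : ℝ) (V f : SpaceTimeFun) (x : Fin 3 → ℝ) (t : ℝ) :
    heatOp hbar V f x t = hbar * pt f x t + hbar ^ 2 / 2 * lap f x t - V x t * f x t :=
  rfl

theorem symmetryOp_apply (hbar : ℝ) (T : ℝ → ℝ) (Q : Fin 3 → SpaceTimeFun) (φ f : SpaceTimeFun)
    (x : Fin 3 → ℝ) (t : ℝ) :
    symmetryOp hbar T Q φ f x t =
      T t * pt f x t + ∑ i, Q i x t * pd i f x t - 1 / hbar * φ x t * f x t := by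
  simp only [symmetryOp, Pi.sub_apply, Pi.add_apply, Pi.mul_apply, Finset.sum_apply,
    Pi.smul_apply, smul_eq_mul, mul_assoc]

theorem symmetryOp_zero (hbar : ℝ) (T : ℝ → ℝ) (Q : Fin 3 → SpaceTimeFun) (φ : SpaceTimeFun) :
    symmetryOp hbar T Q φ 0 = 0 := by
  simp [symmetryOp, pt_zero, pd_zero]

section HeatOperator

variable {hbar : ℝ} {V f g : SpaceTimeFun}

theorem heatOp_add (hf : IsSmooth f) (hg : IsSmooth g) :
    heatOp hbar V (f + g) = heatOp hbar V f + heatOp hbar V g := by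
  ext x t
  simp only [heatOp_apply, pt_add hf hg, lap_add hf hg, Pi.add_apply]
  ring

theorem heatOp_sub (hf : IsSmooth f) (hg : IsSmooth g) :
    heatOp hbar V (f - g) = heatOp hbar V f - heatOp hbar V g := by
  ext x t
  simp only [heatOp_apply, pt_sub hf hg, lap_sub hf hg, Pi.sub_apply]
  ring

theorem heatOp_const_smul (c : ℝ) (f : SpaceTimeFun) :
    heatOp hbar V (c • f) = c • heatOp hbar V f := by
  ext x t
  simp only [heatOp_apply, pt_const_smul, lap_const_smul, Pi.smul_apply, smul_eq_mul]
  ring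

theorem heatOp_sum {ι : Type*} {s : Finset ι} {f : ι → SpaceTimeFun}
    (hf : ∀ k ∈ s, IsSmooth (f k)) :
    heatOp hbar V (∑ k ∈ s, f k) = ∑ k ∈ s, heatOp hbar V (f k) := by
  simp only [heatOp, pt_sum hf, lap_sum hf, Finset.mul_sum, Finset.smul_sum,
    ← Finset.sum_add_distrib, ← Finset.sum_sub_distrib]

theorem heatOp_mul (hf : IsSmooth f) (hg : IsSmooth g) :
    heatOp hbar V (f * g) = f * heatOp hbar V g + hbar • (pt f * g)
      + (hbar ^ 2 / 2) • (lap f * g + 2 * ∑ i, pd i f * pd i g) := by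
  ext x t
  simp only [heatOp_apply, pt_mul hf hg, lap_mul hf hg, Pi.add_apply, Pi.mul_apply,
    Pi.smul_apply, smul_eq_mul, Finset.sum_apply, Pi.ofNat_apply]
  ring

theorem heatOp_pt (hV : IsSmooth V) (hg : IsSmooth g) :
    heatOp hbar V (pt g) = pt (heatOp hbar V g) + pt V * g := by
  rw [heatOp, heatOp, pt_sub ((isSmooth_pt hg).const_smul _ |>.add ((isSmooth_lap hg).const_smul _))
    (hV.mul hg), pt_add ((isSmooth_pt hg).const_smul _) ((isSmooth_lap hg).const_smul _),
    pt_const_smul, pt_const_smul, pt_mul hV hg, pt_lap_comm hg]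
  ring

theorem heatOp_pd (hV : IsSmooth V) (hg : IsSmooth g) (i : Fin 3) :
    heatOp hbar V (pd i g) = pd i (heatOp hbar V g) + pd i V * g := by
  rw [heatOp, heatOp, pd_sub ((isSmooth_pt hg).const_smul _ |>.add ((isSmooth_lap hg).const_smul _))
    (hV.mul hg), pd_add ((isSmooth_pt hg).const_smul _) ((isSmooth_lap hg).const_smul _),
    pd_const_smul, pd_const_smul, pd_mul hV hg, pd_lap_comm hg, pt_pd_comm hg]
  ring

end HeatOperator

section DeterminingEquations

variable {T : ℝ → ℝ} {Q : Fin 3 → SpaceTimeFun}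

theorem pd_pd_self_eq_zero (hdiv : ∀ x t i, deriv T t = 2 * pd i (Q i) x t) (i j : Fin 3) :
    pd j (pd i (Q i)) = 0 := by
  have hdiag : pd i (Q i) = fun _ t => deriv T t / 2 := by
    ext x t; rw [hdiv x t i]; ring
  rw [hdiag, pd_time]

theorem lap_eq_zero_of_determining (hQ : ∀ i, IsSmooth (Q i))
    (hdiv : ∀ x t i, deriv T t = 2 * pd i (Q i) x t)
    (hskew : ∀ x t i j, i ≠ j → pd j (Q i) x t + pd i (Q j) x t = 0) (i : Fin 3) :
    lap (Q i) = 0 := by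
  rw [lap_eq_sum]
  refine Finset.sum_eq_zero fun j _ => ?_
  by_cases hji : j = i
  · subst hji; exact pd_pd_self_eq_zero hdiv j j
  have hsum : pd j (Q i) + pd i (Q j) = 0 := by
    ext x t; exact hskew x t i j (Ne.symm hji)
  have := congrArg (pd j) hsum
  rwa [pd_add (isSmooth_pd (hQ i) j) (isSmooth_pd (hQ j) i), pd_pd_comm (hQ j),
    pd_pd_self_eq_zero hdiv j i, add_zero, pd_zero] at this

theorem sum_pd_mul_pd_pd_eq (hdiv : ∀ x t i, deriv T t = 2 * pd i (Q i) x t)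
    (hskew : ∀ x t i j, i ≠ j → pd j (Q i) x t + pd i (Q j) x t = 0)
    {η : SpaceTimeFun} (hη : IsSmooth η) (x : Fin 3 → ℝ) (t : ℝ) :
    ∑ i, ∑ j, pd j (Q i) x t * pd j (pd i η) x t = deriv T t / 2 * lap η x t := by
  have hcomm : ∀ i j, pd j (pd i η) x t = pd i (pd j η) x t := fun i j =>
    congrFun₂ (pd_pd_comm hη) x t
  simp only [lap, Fin.sum_univ_three]
  rw [hcomm 0 1, hcomm 0 2, hcomm 1 2]
  linear_combination (-(pd 0 (pd 0 η) x t) / 2) * hdiv x t 0 - pd 1 (pd 1 η) x t / 2 * hdiv x t 1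
    - pd 2 (pd 2 η) x t / 2 * hdiv x t 2 + pd 0 (pd 1 η) x t * hskew x t 0 1 (by decide)
    + pd 0 (pd 2 η) x t * hskew x t 0 2 (by decide) + pd 1 (pd 2 η) x t * hskew x t 1 2 (by decide)

theorem heatOp_symmetryOp {hbar : ℝ} (hbar_ne : hbar ≠ 0) {V φ η : SpaceTimeFun}
    (hV : IsSmooth V) (hT : ContDiff ℝ (⊤ : ℕ∞) T) (hQ : ∀ i, IsSmooth (Q i)) (hφ : IsSmooth φ)
    (hdiv : ∀ x t i, deriv T t = 2 * pd i (Q i) x t)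
    (hskew : ∀ x t i j, i ≠ j → pd j (Q i) x t + pd i (Q j) x t = 0)
    (hflow : ∀ x t i, pt (Q i) x t = pd i φ x t)
    (hsource : ∀ x t, pt φ x t + hbar / 2 * lap φ x t =
      deriv T t * V x t + ∑ i, Q i x t * pd i V x t + T t * pt V x t)
    (hη : IsSmooth η) :
    heatOp hbar V (symmetryOp hbar T Q φ η) =
      symmetryOp hbar T Q φ (heatOp hbar V η) + (fun _ t => deriv T t) * heatOp hbar V η := by
  have hT' : IsSmooth (fun _ t => T t) := isSmooth_time hT
  have hTη : IsSmooth ((fun _ t => T t) * pt η) := hT'.mul (isSmooth_pt hη)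
  have hQη : ∀ i ∈ Finset.univ, IsSmooth (Q i * pd i η) := fun i _ =>
    (hQ i).mul (isSmooth_pd hη i)
  rw [symmetryOp, heatOp_sub (hTη.add (isSmooth_sum hQη)) ((hφ.mul hη).const_smul _),
    heatOp_add hTη (isSmooth_sum hQη), heatOp_sum hQη, heatOp_const_smul,
    heatOp_mul hT' (isSmooth_pt hη), heatOp_mul hφ hη, heatOp_pt hV hη]
  simp only [pt_time, pd_time, lap_time, heatOp_mul (hQ _) (isSmooth_pd hη _), heatOp_pd hV hη,
    lap_eq_zero_of_determining hQ hdiv hskew]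
  ext x t
  have hkin := sum_pd_mul_pd_pd_eq hdiv hskew hη x t
  have hsrc := hsource x t
  simp only [Pi.add_apply, Pi.sub_apply, Pi.mul_apply, Pi.smul_apply, Pi.ofNat_apply,
    Finset.sum_apply, smul_eq_mul, symmetryOp_apply, heatOp_apply hbar V η, hflow]
  simp only [Fin.sum_univ_three] at hkin hsrc ⊢
  linear_combination (norm := (field_simp; ring)) hbar ^ 2 * hkin - η x t * hsrc

end DeterminingEquations

end BackwardHeat

open BackwardHeat

/-- **Lie symmetry of the backward heat equation.**  If `(T, Q, φ)` solve the determining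
equations, then the operator `N = T ∂/∂t + Q·∇ − (1/ħ)φ` maps solutions of
`Ĥη = ħ∂η/∂t + (ħ²/2)Δη − Vη = 0` to solutions: `Ĥη = 0 ⟹ Ĥ(Nη) = 0`. -/
theorem lie_symmetry_backward_heat_equation
    (hbar : ℝ) (hhbar : 0 < hbar)
    (V : (Fin 3 → ℝ) → ℝ → ℝ)
    (hV : ContDiff ℝ (⊤ : ℕ∞) (fun p : (Fin 3 → ℝ) × ℝ => V p.1 p.2))
    (T : ℝ → ℝ) (hT : ContDiff ℝ (⊤ : ℕ∞) T)
    (Q : (Fin 3 → ℝ) → ℝ → Fin 3 → ℝ)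
    (hQ : ContDiff ℝ (⊤ : ℕ∞) (fun p : (Fin 3 → ℝ) × ℝ => Q p.1 p.2))
    (φ : (Fin 3 → ℝ) → ℝ → ℝ)
    (hφ : ContDiff ℝ (⊤ : ℕ∞) (fun p : (Fin 3 → ℝ) × ℝ => φ p.1 p.2))
    (hdet1 : ∀ x t (i : Fin 3), deriv T t = 2 * pd i (fun y s => Q y s i) x t)
    (hdet2 : ∀ x t (i j : Fin 3), i ≠ j →
      pd j (fun y s => Q y s i) x t + pd i (fun y s => Q y s j) x t = 0)
    (hdet3 : ∀ x t (i : Fin 3), pt (fun y s => Q y s i) x t = pd i φ x t)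
    (hdet4 : ∀ x t,
      pt φ x t + (hbar / 2) * lap φ x t =
        deriv T t * V x t + (∑ i, Q x t i * pd i V x t) + T t * pt V x t)
    -- the operators Ĥ and N
    (Hhat N : ((Fin 3 → ℝ) → ℝ → ℝ) → (Fin 3 → ℝ) → ℝ → ℝ)
    (hHhat : ∀ f x t,
      Hhat f x t = hbar * pt f x t + (hbar ^ 2 / 2) * lap f x t - V x t * f x t)
    (hN : ∀ f x t,
      N f x t = T t * pt f x t + (∑ i, Q x t i * pd i f x t) - (1 / hbar) * φ x t * f x t) :
    ∀ η : (Fin 3 → ℝ) → ℝ → ℝ,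
      ContDiff ℝ (⊤ : ℕ∞) (fun p : (Fin 3 → ℝ) × ℝ => η p.1 p.2) →
      (∀ x t, Hhat η x t = 0) →
      (∀ x t, Hhat (N η) x t = 0) := by
  intro η hη hHη x t
  have hHhat' : Hhat = heatOp hbar V := by
    ext f y s; exact hHhat f y s
  have hN' : N = symmetryOp hbar T (fun i y s => Q y s i) φ := by
    ext f y s; rw [hN, symmetryOp_apply]
  have hzero : heatOp hbar V η = 0 := by
    ext y s; rw [← hHhat']; exact hHη y s
  rw [hHhat', hN', heatOp_symmetryOp (Q := fun i y s => Q y s i) hhbar.ne' hV hT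
    (fun i => contDiff_pi.1 hQ i) hφ hdet1 hdet2 hdet3 hdet4 hη, hzero, symmetryOp_zero]
  simp
end
end

section
/- (Deformed uncertainty relation.) Let ħ > 0 and let ρ : ℝ³ → ℝ be a C¹ strictly positive probability density such that ∂ρ/∂x_k and x_j ∂ρ/∂x_k are integrable for all j,k and x_j ρ(x) → 0 as |x| → ∞ along each coordinate direction. Let B, B* : ℝ³ → ℝ³ be measurable drift fields related by B*(x) = B(x) − ħ ∇ log ρ(x), with x_j B_k ρ and x_j B*_k ρ integrable. Then for all 1 ≤ j,k ≤ 3: ∫_{ℝ³} x_j (B*_k(x) − B_k(x)) ρ(x) dx = ħ δ_{jk}. -/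
/-! Since `∂_k log ρ = ∂_k ρ / ρ`, the integrand equals `-ħ x_j ∂_k ρ`. Integrating by parts along
each line parallel to the `x_k`-axis, the boundary term `x_j ρ` vanishes by the decay assumption
and `∂_k x_j = δ_{jk}`, so `∫ x_j ∂_k ρ = -δ_{jk} ∫ ρ = -δ_{jk}`. -/

open MeasureTheory Real Filter

noncomputable section

theorem integral_eq_zero_of_hasDerivAt_update {n : ℕ} {E : Type*} [NormedAddCommGroup E]
    [NormedSpace ℝ E] [CompleteSpace E] {g g' : (Fin (n + 1) → ℝ) → E} (k : Fin (n + 1))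
    (hderiv : ∀ x s,
      HasDerivAt (fun t => g (Function.update x k t)) (g' (Function.update x k s)) s)
    (hg' : Integrable g')
    (hbot : ∀ x, Tendsto (fun s => g (Function.update x k s)) atBot (nhds 0))
    (htop : ∀ x, Tendsto (fun s => g (Function.update x k s)) atTop (nhds 0)) :
    ∫ x, g' x = 0 := by
  set e := MeasurableEquiv.piFinSuccAbove (fun _ : Fin (n + 1) => ℝ) k
  have he : MeasurePreserving e.symm volume volume :=
    (volume_preserving_piFinSuccAbove (fun _ : Fin (n + 1) => ℝ) k).symm e
  have hline : ∀ (y : Fin n → ℝ) (s : ℝ),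
      e.symm (s, y) = Function.update (Fin.insertNth k 0 y) k s := fun y s => by
    rw [Fin.update_insertNth]
    rfl
  have hg'e : Integrable (fun p : ℝ × (Fin n → ℝ) => g' (e.symm p)) (volume.prod volume) :=
    (he.integrable_comp_emb e.symm.measurableEmbedding).mpr hg'
  have hfiber : ∀ᵐ y : Fin n → ℝ, ∫ s, g' (e.symm (s, y)) = 0 := by
    filter_upwards [hg'e.prod_left_ae] with y hy
    simp only [hline] at hy ⊢
    rw [integral_of_hasDerivAt_of_tendsto (hderiv _) hy (hbot _) (htop _), sub_zero]
  calc ∫ x, g' x = ∫ p, g' (e.symm p) ∂(volume.prod volume) := (he.integral_comp' g').symm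
    _ = ∫ y, ∫ s, g' (e.symm (s, y)) := integral_prod_symm _ hg'e
    _ = 0 := by rw [integral_congr_ae hfiber, integral_zero]

theorem hasDerivAt_pds_s13 {ρ : (Fin 3 → ℝ) → ℝ} (hρ : Differentiable ℝ ρ) (x : Fin 3 → ℝ)
    (k : Fin 3) (s : ℝ) :
    HasDerivAt (fun t => ρ (Function.update x k t)) (pds k ρ (Function.update x k s)) s := by
  have h : HasDerivAt (fun t => ρ (Function.update x k t))
      (fderiv ℝ ρ (Function.update x k s) (Pi.single k 1)) s :=
    (hρ _).hasFDerivAt.comp_hasDerivAt s (hasDerivAt_update x k s)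
  have hpds : pds k ρ (Function.update x k s) = deriv (fun t => ρ (Function.update x k t)) s := by
    simp only [pds, Function.update_idem, Function.update_self]
  rwa [hpds, h.deriv]

theorem pds_log {ρ : (Fin 3 → ℝ) → ℝ} (hρ : Differentiable ℝ ρ) {x : Fin 3 → ℝ}
    (hx : ρ x ≠ 0) (k : Fin 3) :
    pds k (fun y => Real.log (ρ y)) x = pds k ρ x / ρ x := by
  have h := hasDerivAt_pds_s13 hρ x k (x k)
  have hx' : ρ (Function.update x k (x k)) ≠ 0 := by rwa [Function.update_eq_self]
  have hlog := (h.log hx').deriv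
  rwa [Function.update_eq_self] at hlog

theorem integral_coord_mul_pds {ρ : (Fin 3 → ℝ) → ℝ} (hρ : Differentiable ℝ ρ)
    (hρint : Integrable ρ) (j k : Fin 3) (hxdρint : Integrable fun x => x j * pds k ρ x)
    (hbot : ∀ x, Tendsto (fun s => Function.update x k s j * ρ (Function.update x k s))
      atBot (nhds 0))
    (htop : ∀ x, Tendsto (fun s => Function.update x k s j * ρ (Function.update x k s))
      atTop (nhds 0)) :
    ∫ x, x j * pds k ρ x = -(if j = k then 1 else 0) * ∫ x, ρ x := by
  have hderiv : ∀ x s, HasDerivAt (fun t => Function.update x k t j * ρ (Function.update x k t))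
      ((fun y => y j * pds k ρ y + (if j = k then 1 else 0) * ρ y) (Function.update x k s)) s := by
    intro x s
    have hcoord := hasDerivAt_pi.1 (hasDerivAt_update x k s) j
    rw [Pi.single_apply] at hcoord
    exact (hcoord.mul (hasDerivAt_pds_s13 hρ x k s)).congr_deriv (by ring)
  have hibp : ∫ x, (x j * pds k ρ x + (if j = k then 1 else 0) * ρ x) = 0 :=
    integral_eq_zero_of_hasDerivAt_update (g := fun y => y j * ρ y) k hderiv (hxdρint.add (hρint.const_mul _))
      hbot htop
  rw [integral_add hxdρint (hρint.const_mul _), integral_const_mul] at hibp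
  linarith

theorem deformed_uncertainty_relation_general
    (hbar : ℝ)
    (ρ : (Fin 3 → ℝ) → ℝ) (hρC1 : ContDiff ℝ 1 ρ)
    (hρpos : ∀ x, 0 < ρ x)
    (hρprob : ∫ x : Fin 3 → ℝ, ρ x = 1)
    (hρint : Integrable ρ)
    (hxdρint : ∀ j k : Fin 3, Integrable (fun x : Fin 3 → ℝ => x j * pds k ρ x))
    (hdecay : ∀ (j k : Fin 3) (x : Fin 3 → ℝ),
      Tendsto (fun s : ℝ => Function.update x k s j * ρ (Function.update x k s))
        atTop (nhds 0) ∧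
      Tendsto (fun s : ℝ => Function.update x k s j * ρ (Function.update x k s))
        atBot (nhds 0))
    (B Bstar : (Fin 3 → ℝ) → Fin 3 → ℝ)
    (hrel : ∀ x i, Bstar x i = B x i - hbar * pds i (fun y => Real.log (ρ y)) x) :
    ∀ j k : Fin 3,
      (∫ x : Fin 3 → ℝ, x j * (Bstar x k - B x k) * ρ x)
        = hbar * (if j = k then 1 else 0) := by
  intro j k
  have hρ : Differentiable ℝ ρ := hρC1.differentiable one_ne_zero
  have hintegrand : ∀ x : Fin 3 → ℝ,
      x j * (Bstar x k - B x k) * ρ x = -hbar * (x j * pds k ρ x) := by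
    intro x
    rw [hrel, pds_log hρ (hρpos x).ne']
    field_simp [(hρpos x).ne']
    ring
  simp_rw [hintegrand, integral_const_mul, integral_coord_mul_pds hρ hρint j k (hxdρint j k)
    (fun x => (hdecay j k x).2) (fun x => (hdecay j k x).1), hρprob]
  ring

/-- **Deformed (stochastic) uncertainty relation.**  If `ρ > 0` is a `C¹` probability
density on `ℝ³` with suitable integrability and decay, and the drifts satisfy
`B* = B − ħ∇log ρ`, then `∫ x_j (B*_k − B_k) ρ dx = ħ δ_{jk}`, the probabilistic
counterpart of Heisenberg's commutation relation `[Q_j, P_k] = iħδ_{jk}`. -/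
theorem deformed_uncertainty_relation
    (hbar : ℝ) (hhbar : 0 < hbar)
    (ρ : (Fin 3 → ℝ) → ℝ) (hρC1 : ContDiff ℝ 1 ρ)
    (hρpos : ∀ x, 0 < ρ x)
    (hρprob : ∫ x : Fin 3 → ℝ, ρ x = 1)
    (hρint : Integrable ρ)
    (hdρint : ∀ k : Fin 3, Integrable (fun x : Fin 3 → ℝ => pds k ρ x))
    (hxdρint : ∀ j k : Fin 3, Integrable (fun x : Fin 3 → ℝ => x j * pds k ρ x))
    (hdecay : ∀ (j k : Fin 3) (x : Fin 3 → ℝ),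
      Tendsto (fun s : ℝ => Function.update x k s j * ρ (Function.update x k s))
        atTop (nhds 0) ∧
      Tendsto (fun s : ℝ => Function.update x k s j * ρ (Function.update x k s))
        atBot (nhds 0))
    (B Bstar : (Fin 3 → ℝ) → Fin 3 → ℝ)
    (hBmeas : Measurable B) (hBstarmeas : Measurable Bstar)
    (hrel : ∀ x i, Bstar x i = B x i - hbar * pds i (fun y => Real.log (ρ y)) x)
    (hBint : ∀ j k : Fin 3, Integrable (fun x : Fin 3 → ℝ => x j * B x k * ρ x))
    (hBstarint : ∀ j k : Fin 3, Integrable (fun x : Fin 3 → ℝ => x j * Bstar x k * ρ x)) :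
    ∀ j k : Fin 3,
      (∫ x : Fin 3 → ℝ, x j * (Bstar x k - B x k) * ρ x)
        = hbar * (if j = k then 1 else 0) :=
  deformed_uncertainty_relation_general hbar ρ hρC1 hρpos hρprob hρint hxdρint hdecay B Bstar hrel
end
end
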